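/- Fix integers r ≥ 1 and a real m > 1. For the sum N(Ξ) = Σ over positive-integer r-tuples (ν₁,…,ν_r) with ν₁^{(m-1)/m} ν₂ ⋯ ν_r ≤ Ξ of ν₁² (1 + ν₁² + ⋯ + ν_r²)^{-1}: as Ξ → ∞, N(Ξ) is bounded above and below by positive constant multiples of Ξ^{m/(m-1)}. -/

import Mathlib

/-!
Put `q = (m - 1) / m ∈ (0, 1)`. The weight `ν₁² / (1 + |ν|²)` lies in `[0, 1)`, so `N(Ξ)` is at
most the number of lattice points of the region. For a fixed tail `w = (ν₂, …, ν_r)` the admissible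
heads satisfy `ν₁ ≤ Ξ^{1/q} ∏ₖ wₖ^{-1/q}`, and summing over all tails bounds the count by
`ζ(1/q)^{r-1} Ξ^{1/q}`, finite because `1/q = m/(m-1) > 1`. Conversely the `⌊Ξ^{1/q}⌋` points
`(j, 1, …, 1)` lie in the region and each has weight at least `1/(r+1)`.
-/

open Finset

noncomputable section

def hyperbolicRegion (n : ℕ) (q Ξ : ℝ) : Set (Fin (n + 1) → ℕ) :=
  {v | (∀ k, 0 < v k) ∧ (v 0 : ℝ) ^ q * ∏ k ∈ univ.erase 0, (v k : ℝ) ≤ Ξ}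

def headWeight {n : ℕ} (v : Fin (n + 1) → ℕ) : ℝ :=
  (v 0 : ℝ) ^ 2 / (1 + ∑ k, (v k : ℝ) ^ 2)

def hyperbolicCover (n : ℕ) (q Ξ : ℝ) : Finset (Fin (n + 1) → ℕ) :=
  (Fintype.piFinset fun _ : Fin n => Icc 1 ⌊Ξ⌋₊).biUnion fun w =>
    (Icc 1 ⌊Ξ ^ q⁻¹ * ∏ k, ((w k : ℝ) ^ q⁻¹)⁻¹⌋₊).image fun j => (Fin.cons j w : Fin (n + 1) → ℕ)

end

theorem Fin.prod_univ_erase_zero {M : Type*} [CommMonoid M] {n : ℕ} (f : Fin (n + 1) → M) :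
    ∏ k ∈ univ.erase 0, f k = ∏ k : Fin n, f k.succ := by
  simp [Fin.univ_succ]

theorem Set.Finite.tsum_subtype_eq_sum {β : Type*} {s : Set β} (hs : s.Finite) (f : β → ℝ) :
    ∑' x : s, f x = ∑ x ∈ hs.toFinset, f x := by
  rw [← Finset.tsum_subtype', hs.coe_toFinset]

theorem sum_piFinset_prod_le_tsum_pow {ι α : Type*} [Fintype ι] [DecidableEq ι] {g : α → ℝ}
    (hg : ∀ a, 0 ≤ g a) (hsum : Summable g) (t : Finset α) :
    ∑ w ∈ Fintype.piFinset (fun _ : ι => t), ∏ k, g (w k) ≤ (∑' a, g a) ^ Fintype.card ι := by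
  rw [← prod_univ_sum, ← card_univ, ← prod_const]
  exact prod_le_prod (fun _ _ => sum_nonneg fun a _ => hg a)
    fun _ _ => hsum.sum_le_tsum t fun a _ => hg a

theorem le_two_mul_floor {x : ℝ} (hx : 1 ≤ x) : x ≤ 2 * ⌊x⌋₊ := by
  have hfloor : (1 : ℝ) ≤ ⌊x⌋₊ := by exact_mod_cast Nat.le_floor (by simpa using hx)
  linarith [Nat.sub_one_lt_floor x]

section

variable {n : ℕ} {q Ξ : ℝ}

theorem mem_hyperbolicRegion {v : Fin (n + 1) → ℕ} :
    v ∈ hyperbolicRegion n q Ξ ↔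
      (∀ k, 0 < v k) ∧ (v 0 : ℝ) ^ q * ∏ k : Fin n, (v k.succ : ℝ) ≤ Ξ := by
  rw [hyperbolicRegion, Set.mem_ofPred_eq, Fin.prod_univ_erase_zero]

theorem headWeight_nonneg (v : Fin (n + 1) → ℕ) : 0 ≤ headWeight v := by
  unfold headWeight
  positivity

theorem headWeight_le_one (v : Fin (n + 1) → ℕ) : headWeight v ≤ 1 := by
  unfold headWeight
  rw [div_le_one (by positivity)]
  have := single_le_sum (fun k _ => sq_nonneg (v k : ℝ)) (mem_univ 0)
  linarith

theorem inv_add_two_le_headWeight_cons {j : ℕ} (hj : 1 ≤ j) :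
    ((n : ℝ) + 2)⁻¹ ≤ headWeight (Fin.cons j fun _ : Fin n => 1 : Fin (n + 1) → ℕ) := by
  have hj' : (1 : ℝ) ≤ j := by exact_mod_cast hj
  simp only [headWeight, Fin.sum_univ_succ, Fin.cons_zero, Fin.cons_succ, Nat.cast_one, one_pow,
    sum_const, card_univ, Fintype.card_fin, nsmul_eq_mul, mul_one]
  rw [← one_div, div_le_div_iff₀ (by positivity) (by positivity)]
  nlinarith [mul_le_mul_of_nonneg_right (one_le_pow₀ hj' : (1 : ℝ) ≤ (j : ℝ) ^ 2)
    (by positivity : (0 : ℝ) ≤ n + 1)]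

theorem cons_one_mem_hyperbolicRegion (hq : 0 < q) (hΞ : 0 ≤ Ξ) {j : ℕ} (hj : 1 ≤ j)
    (hjΞ : (j : ℝ) ≤ Ξ ^ q⁻¹) :
    (Fin.cons j fun _ : Fin n => 1 : Fin (n + 1) → ℕ) ∈ hyperbolicRegion n q Ξ := by
  rw [mem_hyperbolicRegion]
  refine ⟨Fin.cases (by simpa) fun _ => by simp, ?_⟩
  simp only [Fin.cons_zero, Fin.cons_succ, Nat.cast_one, prod_const_one, mul_one]
  calc (j : ℝ) ^ q ≤ (Ξ ^ q⁻¹) ^ q := Real.rpow_le_rpow (by positivity) hjΞ hq.le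
    _ = Ξ := Real.rpow_inv_rpow hΞ hq.ne'

theorem tail_le_of_mem_hyperbolicRegion (hq : 0 ≤ q) {v : Fin (n + 1) → ℕ}
    (hv : v ∈ hyperbolicRegion n q Ξ) (k : Fin n) : (v k.succ : ℝ) ≤ Ξ := by
  obtain ⟨hpos, hle⟩ := mem_hyperbolicRegion.1 hv
  have hhead : 1 ≤ (v 0 : ℝ) ^ q := Real.one_le_rpow (Nat.one_le_cast.2 (hpos 0)) hq
  have htail : (v k.succ : ℝ) ≤ ∏ i : Fin n, (v i.succ : ℝ) := by
    exact_mod_cast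
      single_le_prod' (f := fun i : Fin n => v i.succ) (fun i _ => hpos i.succ) (mem_univ k)
  calc (v k.succ : ℝ) ≤ ∏ i : Fin n, (v i.succ : ℝ) := htail
    _ ≤ (v 0 : ℝ) ^ q * ∏ i : Fin n, (v i.succ : ℝ) :=
        le_mul_of_one_le_left (by positivity) hhead
    _ ≤ Ξ := hle

theorem head_le_of_mem_hyperbolicRegion (hq : 0 < q) {v : Fin (n + 1) → ℕ}
    (hv : v ∈ hyperbolicRegion n q Ξ) :
    (v 0 : ℝ) ≤ Ξ ^ q⁻¹ * ∏ k : Fin n, ((v k.succ : ℝ) ^ q⁻¹)⁻¹ := by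
  obtain ⟨hpos, hle⟩ := mem_hyperbolicRegion.1 hv
  have hP : 0 < ∏ k : Fin n, (v k.succ : ℝ) :=
    prod_pos fun (k : Fin n) _ => by exact_mod_cast hpos k.succ
  have hΞ : 0 ≤ Ξ := le_trans (by positivity) hle
  have h : (v 0 : ℝ) ^ q ≤ Ξ / ∏ k : Fin n, (v k.succ : ℝ) := (le_div_iff₀ hP).2 hle
  calc (v 0 : ℝ) = ((v 0 : ℝ) ^ q) ^ q⁻¹ := (Real.rpow_rpow_inv (by positivity) hq.ne').symm
    _ ≤ (Ξ / ∏ k : Fin n, (v k.succ : ℝ)) ^ q⁻¹ :=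
        Real.rpow_le_rpow (by positivity) h (by positivity)
    _ = Ξ ^ q⁻¹ * ∏ k : Fin n, ((v k.succ : ℝ) ^ q⁻¹)⁻¹ := by
      rw [Real.div_rpow hΞ hP.le, ← Real.finsetProd_rpow _ _ fun k _ => by positivity,
        div_eq_mul_inv, prod_inv_distrib]

theorem hyperbolicRegion_subset_cover (hq : 0 < q) :
    hyperbolicRegion n q Ξ ⊆ hyperbolicCover n q Ξ := by
  intro v hv
  have hpos := (mem_hyperbolicRegion.1 hv).1
  refine mem_biUnion.2 ⟨Fin.tail v, ?_, mem_image.2 ⟨v 0, ?_, Fin.cons_self_tail v⟩⟩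
  · exact Fintype.mem_piFinset.2 fun k =>
      mem_Icc.2 ⟨hpos _, Nat.le_floor (tail_le_of_mem_hyperbolicRegion hq.le hv k)⟩
  · exact mem_Icc.2 ⟨hpos 0, Nat.le_floor (head_le_of_mem_hyperbolicRegion hq hv)⟩

theorem hyperbolicRegion_finite (hq : 0 < q) : (hyperbolicRegion n q Ξ).Finite :=
  (hyperbolicCover n q Ξ).finite_toSet.subset (hyperbolicRegion_subset_cover hq)

theorem card_hyperbolicCover_le (hq : 0 < q) (hq1 : q < 1) (hΞ : 0 ≤ Ξ) :
    (#(hyperbolicCover n q Ξ) : ℝ) ≤ (∑' j : ℕ, ((j : ℝ) ^ q⁻¹)⁻¹) ^ n * Ξ ^ q⁻¹ := by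
  have hsum : Summable fun j : ℕ => ((j : ℝ) ^ q⁻¹)⁻¹ :=
    Real.summable_nat_rpow_inv.2 ((one_lt_inv₀ hq).2 hq1)
  set T := Fintype.piFinset fun _ : Fin n => Icc 1 ⌊Ξ⌋₊
  have hcard : #(hyperbolicCover n q Ξ) ≤ ∑ w ∈ T, ⌊Ξ ^ q⁻¹ * ∏ k, ((w k : ℝ) ^ q⁻¹)⁻¹⌋₊ :=
    card_biUnion_le.trans <| sum_le_sum fun w _ => card_image_le.trans (Nat.card_Icc 1 _).le
  calc (#(hyperbolicCover n q Ξ) : ℝ)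
      ≤ ∑ w ∈ T, (⌊Ξ ^ q⁻¹ * ∏ k, ((w k : ℝ) ^ q⁻¹)⁻¹⌋₊ : ℝ) := by exact_mod_cast hcard
    _ ≤ ∑ w ∈ T, Ξ ^ q⁻¹ * ∏ k, ((w k : ℝ) ^ q⁻¹)⁻¹ :=
        sum_le_sum fun w _ => Nat.floor_le (by positivity)
    _ = Ξ ^ q⁻¹ * ∑ w ∈ T, ∏ k, ((w k : ℝ) ^ q⁻¹)⁻¹ := (mul_sum _ _ _).symm
    _ ≤ Ξ ^ q⁻¹ * (∑' j : ℕ, ((j : ℝ) ^ q⁻¹)⁻¹) ^ n := by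
        gcongr
        simpa using
          sum_piFinset_prod_le_tsum_pow (ι := Fin n) (fun j => by positivity) hsum (Icc 1 ⌊Ξ⌋₊)
    _ = _ := mul_comm _ _

theorem tsum_headWeight_le (hq : 0 < q) (hq1 : q < 1) (hΞ : 0 ≤ Ξ) :
    ∑' v : hyperbolicRegion n q Ξ, headWeight v.1 ≤
      (∑' j : ℕ, ((j : ℝ) ^ q⁻¹)⁻¹) ^ n * Ξ ^ q⁻¹ := by
  have hfin := hyperbolicRegion_finite (n := n) (Ξ := Ξ) hq
  rw [hfin.tsum_subtype_eq_sum]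
  calc ∑ v ∈ hfin.toFinset, headWeight v ≤ #hfin.toFinset := by
        simpa using sum_le_sum fun v (_ : v ∈ hfin.toFinset) => headWeight_le_one v
    _ ≤ #(hyperbolicCover n q Ξ) := by
        exact_mod_cast card_le_card (hfin.toFinset_subset.2 (hyperbolicRegion_subset_cover hq))
    _ ≤ _ := card_hyperbolicCover_le hq hq1 hΞ

theorem le_tsum_headWeight (hq : 0 < q) (hΞ : 1 ≤ Ξ) :
    (2 * ((n : ℝ) + 2))⁻¹ * Ξ ^ q⁻¹ ≤ ∑' v : hyperbolicRegion n q Ξ, headWeight v.1 := by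
  have hfin := hyperbolicRegion_finite (n := n) (Ξ := Ξ) hq
  set B := ⌊Ξ ^ q⁻¹⌋₊
  have hB : Ξ ^ q⁻¹ ≤ 2 * B := le_two_mul_floor (Real.one_le_rpow hΞ (inv_nonneg.2 hq.le))
  set e : ℕ → Fin (n + 1) → ℕ := fun j => Fin.cons j fun _ => 1
  have he : Function.Injective e := Fin.cons_left_injective (α := fun _ => ℕ) _
  have hsub : (Icc 1 B).image e ⊆ hfin.toFinset := by
    intro v hv
    obtain ⟨j, hj, rfl⟩ := mem_image.1 hv
    obtain ⟨hj1, hjB⟩ := mem_Icc.1 hj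
    exact (Set.Finite.mem_toFinset hfin).2 <| cons_one_mem_hyperbolicRegion hq (by linarith) hj1
      ((Nat.cast_le.2 hjB).trans (Nat.floor_le (by positivity)))
  rw [hfin.tsum_subtype_eq_sum]
  calc (2 * ((n : ℝ) + 2))⁻¹ * Ξ ^ q⁻¹ = Ξ ^ q⁻¹ / 2 * ((n : ℝ) + 2)⁻¹ := by
        rw [mul_inv]; ring
    _ ≤ B * ((n : ℝ) + 2)⁻¹ := by gcongr; linarith
    _ = ∑ j ∈ Icc 1 B, ((n : ℝ) + 2)⁻¹ := by simp
    _ ≤ ∑ j ∈ Icc 1 B, headWeight (e j) :=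
        sum_le_sum fun j hj => inv_add_two_le_headWeight_cons (mem_Icc.1 hj).1
    _ = ∑ v ∈ (Icc 1 B).image e, headWeight v :=
        (sum_image fun a _ b _ hab => he hab).symm
    _ ≤ ∑ v ∈ hfin.toFinset, headWeight v :=
        sum_le_sum_of_subset_of_nonneg hsub fun v _ _ => headWeight_nonneg v

end

/-- Discrete counterpart of the derivative lower-bound integral: for `r ≥ 1`, `m > 1`,
the sum `N(Ξ) = Σ_{ν₁^{(m-1)/m} ν₂⋯ν_r ≤ Ξ} ν₁² (1 + ν₁² + ⋯ + ν_r²)⁻¹`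
over positive-integer tuples is `≍ Ξ^{m/(m-1)}` as `Ξ → ∞`. -/
theorem sum_weighted_region_asymp (r : ℕ) (hr : 0 < r) (m : ℝ) (hm : 1 < m) :
    ∃ c C Ξ₀ : ℝ, 0 < c ∧ c ≤ C ∧ 0 < Ξ₀ ∧ ∀ Ξ : ℝ, Ξ₀ ≤ Ξ →
      c * Ξ ^ (m / (m - 1)) ≤
        (∑' ν : {v : Fin r → ℕ // (∀ k, 0 < v k) ∧
            ((v ⟨0, hr⟩ : ℝ)) ^ ((m - 1) / m) *
              ∏ k ∈ Finset.univ.erase ⟨0, hr⟩, ((v k : ℝ)) ≤ Ξ},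
          ((ν.1 ⟨0, hr⟩ : ℝ)) ^ 2 / (1 + ∑ k, ((ν.1 k : ℝ)) ^ 2)) ∧
      (∑' ν : {v : Fin r → ℕ // (∀ k, 0 < v k) ∧
            ((v ⟨0, hr⟩ : ℝ)) ^ ((m - 1) / m) *
              ∏ k ∈ Finset.univ.erase ⟨0, hr⟩, ((v k : ℝ)) ≤ Ξ},
          ((ν.1 ⟨0, hr⟩ : ℝ)) ^ 2 / (1 + ∑ k, ((ν.1 k : ℝ)) ^ 2)) ≤
        C * Ξ ^ (m / (m - 1)) := by
  obtain ⟨n, rfl⟩ : ∃ n, r = n + 1 := ⟨r - 1, by omega⟩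
  have hq : 0 < (m - 1) / m := div_pos (by linarith) (by linarith)
  have hq1 : (m - 1) / m < 1 := (div_lt_one (by linarith)).2 (by linarith)
  rw [show m / (m - 1) = ((m - 1) / m)⁻¹ from (inv_div _ _).symm]
  set c : ℝ := (2 * ((n : ℝ) + 2))⁻¹
  set Z := ∑' j : ℕ, ((j : ℝ) ^ ((m - 1) / m)⁻¹)⁻¹
  refine ⟨c, max c (Z ^ n), 1, by positivity, le_max_left _ _, one_pos, fun Ξ hΞ => ⟨?_, ?_⟩⟩
  -- Both goals are about `hyperbolicRegion n ((m - 1) / m) Ξ` up to unfolding (`⟨0, hr⟩` is `0`).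
  · exact le_tsum_headWeight hq hΞ
  · calc _ ≤ Z ^ n * Ξ ^ ((m - 1) / m)⁻¹ := tsum_headWeight_le hq hq1 (by linarith)
      _ ≤ _ := by gcongr; exact le_max_right _ _
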